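/- arXiv:1401.3238 — 4 statements merged into one kernel-verified Lean document; each statement's English description precedes it below -/
import Mathlib

section
/- Let (H, J) be a Krein space with J ≠ id and J ≠ −id, let s ⊆ ℝ be a convex set (an interval), and let f : ℝ → ℝ. Suppose that for all α, β ∈ s and all λ ∈ [0,1] the scalar Jensen inequality holds in the J-order, i.e. the operator ((1−λ)·f(α) + λ·f(β) − f((1−λ)·α + λ·β)) • J is positive. Then f is affine on s in the sense that f((1−λ)·α + λ·β) = (1−λ)·f(α) + λ·f(β) for all α, β ∈ s and λ ∈ [0,1]. -/
open ContinuousLinearMap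

section Involution

variable {R M : Type*} [Ring R] [AddCommGroup M] [Module R M] [TopologicalSpace M]
  {J : M →L[R] M}

lemma exists_ne_zero_apply_eq_neg_of_comp_self_eq_one (hJ2 : J ∘L J = 1) (hJ1 : J ≠ 1) :
    ∃ u : M, u ≠ 0 ∧ J u = -u := by
  obtain ⟨x, hx⟩ : ∃ x, J x ≠ x := by
    by_contra! h
    exact hJ1 (ext h)
  refine ⟨J x - x, sub_ne_zero.mpr hx, ?_⟩
  have hJJx : J (J x) = x := congrArg (· x) hJ2
  rw [map_sub, hJJx, neg_sub]

lemma exists_ne_zero_apply_eq_self_of_comp_self_eq_one [IsTopologicalAddGroup M]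
    (hJ2 : J ∘L J = 1) (hJneg1 : J ≠ -1) :
    ∃ v : M, v ≠ 0 ∧ J v = v := by
  obtain ⟨y, hy⟩ : ∃ y, J y ≠ -y := by
    by_contra! h
    exact hJneg1 (ext h)
  refine ⟨J y + y, fun h => hy (eq_neg_of_add_eq_zero_left h), ?_⟩
  have hJJy : J (J y) = y := congrArg (· y) hJ2
  rw [map_add, hJJy, add_comm]

end Involution

section Positive

variable {𝕜 E : Type*} [RCLike 𝕜] [NormedAddCommGroup E] [InnerProductSpace 𝕜 E]

lemma ContinuousLinearMap.IsPositive.nonneg_of_apply_eq_smul {T : E →L[𝕜] E}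
    (hT : T.IsPositive) {μ : ℝ} {v : E} (hv : v ≠ 0) (hTv : T v = (μ : 𝕜) • v) : 0 ≤ μ := by
  have h := hT.re_inner_nonneg_left v
  rw [hTv, inner_smul_left, inner_self_eq_norm_sq_to_K, RCLike.conj_ofReal, ← RCLike.ofReal_pow,
    ← RCLike.ofReal_mul, RCLike.ofReal_re] at h
  exact nonneg_of_mul_nonneg_left h (pow_pos (norm_pos_iff.mpr hv) 2)

/-- `J ≠ ±1` provides eigenvectors of `c • J` for the eigenvalues `-c` and `c`. -/
lemma eq_zero_of_isPositive_smul_of_comp_self_eq_one {J : E →L[𝕜] E} (hJ2 : J ∘L J = 1)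
    (hJ1 : J ≠ 1) (hJneg1 : J ≠ -1) {c : ℝ} (hc : ((c : 𝕜) • J).IsPositive) : c = 0 := by
  obtain ⟨u, hu, hJu⟩ := exists_ne_zero_apply_eq_neg_of_comp_self_eq_one hJ2 hJ1
  obtain ⟨v, hv, hJv⟩ := exists_ne_zero_apply_eq_self_of_comp_self_eq_one hJ2 hJneg1
  have hc_nonpos : 0 ≤ -c :=
    hc.nonneg_of_apply_eq_smul hu (by rw [smul_apply, hJu, smul_neg, RCLike.ofReal_neg, neg_smul])
  have hc_nonneg : 0 ≤ c := hc.nonneg_of_apply_eq_smul hv (by rw [smul_apply, hJv])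
  linarith

end Positive

theorem naive_Krein_convexity_forces_affine_general
    {H : Type*} [NormedAddCommGroup H] [InnerProductSpace ℂ H]
    (J : H →L[ℂ] H) (hJ2 : J ∘L J = 1)
    (hJ1 : J ≠ 1) (hJneg1 : J ≠ -1)
    (s : Set ℝ) (f : ℝ → ℝ)
    (hf : ∀ a ∈ s, ∀ b ∈ s, ∀ l ∈ Set.Icc (0 : ℝ) 1,
      ((((1 - l) * f a + l * f b - f ((1 - l) * a + l * b) : ℝ) : ℂ) • J).IsPositive) :
    ∀ a ∈ s, ∀ b ∈ s, ∀ l ∈ Set.Icc (0 : ℝ) 1,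
      f ((1 - l) * a + l * b) = (1 - l) * f a + l * f b := by
  intro a ha b hb l hl
  exact (sub_eq_zero.mp
    (eq_zero_of_isPositive_smul_of_comp_self_eq_one hJ2 hJ1 hJneg1 (hf a ha b hb l hl))).symm

/-- Ando's observation: on a genuine Krein space (`J ≠ ±id`), if a function `f` satisfies the
scalar Jensen inequality in the `J`-order on a convex set `s ⊆ ℝ`, then `f` is affine on `s`. -/
theorem naive_Krein_convexity_forces_affine
    {H : Type*} [NormedAddCommGroup H] [InnerProductSpace ℂ H] [CompleteSpace H]
    (J : H →L[ℂ] H) (hJsa : IsSelfAdjoint J) (hJ2 : J ∘L J = 1)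
    (hJ1 : J ≠ 1) (hJneg1 : J ≠ -1)
    (s : Set ℝ) (hs : Convex ℝ s) (f : ℝ → ℝ)
    (hf : ∀ a ∈ s, ∀ b ∈ s, ∀ l ∈ Set.Icc (0 : ℝ) 1,
      ((((1 - l) * f a + l * f b - f ((1 - l) * a + l * b) : ℝ) : ℂ) • J).IsPositive) :
    ∀ a ∈ s, ∀ b ∈ s, ∀ l ∈ Set.Icc (0 : ℝ) 1,
      f ((1 - l) * a + l * b) = (1 - l) * f a + l * f b :=
  naive_Krein_convexity_forces_affine_general J hJ2 hJ1 hJneg1 s f hf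
end

section
/- In the space of 2×2 complex matrices, let J₀ = !![1, 0; 0, −1], A = !![1, −1; 1, −2] and B = !![1, −1; 1, −3]. Then J₀ * A and J₀ * B are positive semidefinite (so A and B are J₀-positive), but the matrix J₀ * ((A^2 + B^2)/2 − ((A + B)/2)^2) is not positive semidefinite; that is, the midpoint operator convexity inequality ((A+B)/2)^2 ≤^{J₀} (A^2 + B^2)/2 fails, so the function t ↦ t² is not Krein-operator convex. -/
open Matrix ComplexOrder

/-!
The midpoint defect `(A² + B²)/2 - ((A + B)/2)²` equals `((A - B)/2)²` in any algebra. Here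
`A - B = diag(0, 1)`, so `J₀` times the defect is `diag(0, -1/4)`, which has a negative diagonal
entry. On the other hand `J₀ A` and `J₀ B` are the real symmetric matrices `[[1, -1], [-1, 2]]` and
`[[1, -1], [-1, 3]]`, positive semidefinite by the `2 × 2` determinant criterion.
-/

theorem Matrix.posSemidef_fin_two_of_sq_le {𝕜 : Type*} [RCLike 𝕜] {a b c : ℝ} (ha : 0 < a)
    (hb : b ^ 2 ≤ a * c) : (!![(a : 𝕜), b; b, c]).PosSemidef := by
  set d := c - b ^ 2 / a with hd_def
  have hd : 0 ≤ d := sub_nonneg.2 ((div_le_iff₀ ha).2 (by linarith))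
  have hsa : √a * √a = a := Real.mul_self_sqrt ha.le
  have hsd : √d * √d = d := Real.mul_self_sqrt hd
  have hsa0 : √a ≠ 0 := (Real.sqrt_pos.2 ha).ne'
  -- the Cholesky factor
  let L : Matrix (Fin 2) (Fin 2) 𝕜 := !![(√a : 𝕜), (b / √a : ℝ); 0, (√d : ℝ)]
  have hL : !![(a : 𝕜), b; b, c] = Lᴴ * L := by
    ext i j
    fin_cases i <;> fin_cases j <;> simp [L, mul_apply, Fin.sum_univ_two] <;> norm_cast
    · exact hsa.symm
    · field_simp
    · field_simp
    · rw [hsd, div_mul_div_comm, hsa, hd_def]; ring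
  rw [hL]
  exact posSemidef_conjTranspose_mul_self L

theorem midpoint_sq_sub_sq_midpoint {𝕜 R : Type*} [Field 𝕜] [Ring R] [Algebra 𝕜 R] (a b : R) :
    (2 : 𝕜)⁻¹ • (a ^ 2 + b ^ 2) - ((2 : 𝕜)⁻¹ • (a + b)) ^ 2 = ((2 : 𝕜)⁻¹ • (a - b)) ^ 2 := by
  have half_sub_sq : (2 : 𝕜)⁻¹ - 2⁻¹ * 2⁻¹ = 2⁻¹ * 2⁻¹ := by
    rcases eq_or_ne (2 : 𝕜) 0 with h | h
    · simp [h]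
    · field_simp; ring
  simp only [sq, smul_mul_smul, add_mul, mul_add, sub_mul, mul_sub]
  match_scalars <;> first | ring1 | linear_combination half_sub_sq

/-- In the 2-dimensional Minkowski space, the matrices `A = !![1, -1; 1, -2]` and
`B = !![1, -1; 1, -3]` are `J₀`-positive, but the midpoint operator convexity inequality
`((A+B)/2)² ≤^{J₀} (A² + B²)/2` fails; hence `t ↦ t²` is not Krein-operator convex. -/
theorem sq_not_Krein_operator_convex :
    let J₀ : Matrix (Fin 2) (Fin 2) ℂ := !![1, 0; 0, -1]
    let A : Matrix (Fin 2) (Fin 2) ℂ := !![1, -1; 1, -2]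
    let B : Matrix (Fin 2) (Fin 2) ℂ := !![1, -1; 1, -3]
    (J₀ * A).PosSemidef ∧ (J₀ * B).PosSemidef ∧
      ¬ (J₀ * ((2 : ℂ)⁻¹ • (A ^ 2 + B ^ 2) - ((2 : ℂ)⁻¹ • (A + B)) ^ 2)).PosSemidef := by
  intro J₀ A B
  have hA : J₀ * A = !![((1 : ℝ) : ℂ), (-1 : ℝ); (-1 : ℝ), (2 : ℝ)] := by simp [J₀, A]
  have hB : J₀ * B = !![((1 : ℝ) : ℂ), (-1 : ℝ); (-1 : ℝ), (3 : ℝ)] := by simp [J₀, B]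
  have hdefect : (J₀ * ((2 : ℂ)⁻¹ • (A - B)) ^ 2) 1 1 = -4⁻¹ := by
    norm_num [J₀, A, B, sq, mul_apply, Fin.sum_univ_two]
  refine ⟨?_, ?_, ?_⟩
  · rw [hA]
    exact posSemidef_fin_two_of_sq_le (a := 1) (b := -1) (c := 2) one_pos (by norm_num)
  · rw [hB]
    exact posSemidef_fin_two_of_sq_le (a := 1) (b := -1) (c := 3) one_pos (by norm_num)
  · rw [midpoint_sq_sub_sq_midpoint]
    intro h
    have h11 := h.diag_nonneg (i := 1)
    rw [hdefect] at h11
    norm_num [Complex.le_def] at h11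
end

section
/- Let (H, J) be a Krein space, let A and B be invertible J-positive bounded operators on H (J ∘ A and J ∘ B are positive), let λ ∈ [0,1], and suppose (1−λ)•A + λ•B is invertible. Then ((1−λ)•A + λ•B)⁻¹ ≤^J (1−λ)•A⁻¹ + λ•B⁻¹, i.e. the operator J ∘ ((1−λ)•A⁻¹ + λ•B⁻¹ − ((1−λ)•A + λ•B)⁻¹) is positive. -/
/-!
For `a, b` invertible, `s = (1 - t) a + t b` and `c = (1 - t) b⁻¹ + t a⁻¹ = a⁻¹ s b⁻¹`, a direct
computation gives
`(1 - t) a⁻¹ + t b⁻¹ - s⁻¹ = t (1 - t) (a⁻¹ - b⁻¹) c⁻¹ (a⁻¹ - b⁻¹)`.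
If `a, b` are positive, so are `c` and `c⁻¹`, and the right-hand side is a conjugate of a positive
element: the inverse is operator convex in every C⋆-algebra. For the Krein space `(H, J)`, write
`A = J P`, `B = J Q` with `P = J A`, `Q = J B` positive; since `J⁻¹ = J = J⋆`, multiplying the
Krein expression for `A, B` by `J` gives `J X J`, where `X` is the (positive) expression for `P, Q`.
-/

open ContinuousLinearMap Ring

section Algebra

variable {R A : Type*} [CommRing R] [Ring A] [Algebra R A] {a b : A} {t : R}

theorem mul_ringInverse_convexComb_mul (hs : IsUnit ((1 - t) • a + t • b)) :
    a * ((1 - t) • a + t • b)⁻¹ʳ * b =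
      (1 - t) • b + t • a - (t * (1 - t)) • ((b - a) * ((1 - t) • a + t • b)⁻¹ʳ * (b - a)) := by
  have ha : a = (1 - t) • a + t • b - t • (b - a) := by module
  have hb : b = (1 - t) • a + t • b + (1 - t) • (b - a) := by module
  have hss : ((1 - t) • a + t • b) * ((1 - t) • a + t • b)⁻¹ʳ = 1 := mul_inverse_cancel _ hs
  have hss' : ((1 - t) • a + t • b)⁻¹ʳ * ((1 - t) • a + t • b) = 1 := inverse_mul_cancel _ hs
  generalize (1 - t) • a + t • b = s at ha hb hss hss' ⊢
  generalize b - a = d at ha hb ⊢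
  subst ha hb
  simp only [mul_add, mul_sub, sub_mul, smul_mul_assoc, mul_smul_comm, mul_assoc, hss, hss',
    mul_one, one_mul]
  module

theorem ringInverse_mul_convexComb_mul_ringInverse (ha : IsUnit a) (hb : IsUnit b) :
    a⁻¹ʳ * ((1 - t) • a + t • b) * b⁻¹ʳ = (1 - t) • b⁻¹ʳ + t • a⁻¹ʳ := by
  simp only [mul_add, add_mul, mul_smul_comm, smul_mul_assoc, inverse_mul_cancel _ ha,
    mul_inverse_cancel_right _ _ hb, one_mul, add_comm]

theorem convexComb_ringInverse_sub_ringInverse_convexComb (ha : IsUnit a) (hb : IsUnit b)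
    (hs : IsUnit ((1 - t) • a + t • b)) :
    (1 - t) • a⁻¹ʳ + t • b⁻¹ʳ - ((1 - t) • a + t • b)⁻¹ʳ =
      (t * (1 - t)) • ((a⁻¹ʳ - b⁻¹ʳ) * ((1 - t) • b⁻¹ʳ + t • a⁻¹ʳ)⁻¹ʳ * (a⁻¹ʳ - b⁻¹ʳ)) := by
  have hinv : ((1 - t) • b⁻¹ʳ + t • a⁻¹ʳ)⁻¹ʳ = b * ((1 - t) • a + t • b)⁻¹ʳ * a := by
    rw [← ringInverse_mul_convexComb_mul_ringInverse ha hb, inverse_mul (.inr hb.ringInverse),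
      inverse_mul (.inl ha.ringInverse), inverse_inverse ha, inverse_inverse hb, mul_assoc]
  have hab : a * (a⁻¹ʳ - b⁻¹ʳ) * b = b - a := by
    rw [mul_sub, sub_mul, mul_inverse_cancel _ ha, inverse_mul_cancel_right _ _ hb, one_mul]
  rw [hinv]
  refine (ha.mul_left_cancel (hb.mul_right_cancel ?_))
  calc a * ((1 - t) • a⁻¹ʳ + t • b⁻¹ʳ - ((1 - t) • a + t • b)⁻¹ʳ) * b
      = (1 - t) • b + t • a - a * ((1 - t) • a + t • b)⁻¹ʳ * b := by
        simp only [mul_add, mul_sub, add_mul, sub_mul, mul_smul_comm, smul_mul_assoc,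
          mul_inverse_cancel _ ha, inverse_mul_cancel_right _ _ hb, one_mul, mul_assoc]
    _ = (t * (1 - t)) • ((b - a) * ((1 - t) • a + t • b)⁻¹ʳ * (b - a)) := by
        rw [mul_ringInverse_convexComb_mul hs, sub_sub_cancel]
    _ = a * ((t * (1 - t)) • ((a⁻¹ʳ - b⁻¹ʳ) * (b * ((1 - t) • a + t • b)⁻¹ʳ * a) *
          (a⁻¹ʳ - b⁻¹ʳ))) * b := by
        rw [← hab]
        simp only [mul_smul_comm, smul_mul_assoc, mul_assoc]

end Algebra

section CStarAlgebra

variable {A : Type*} [CStarAlgebra A] [PartialOrder A] [StarOrderedRing A] {a b : A} {t : ℝ}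

theorem IsStrictlyPositive.convexComb (ha : IsStrictlyPositive a) (hb : IsStrictlyPositive b)
    (ht₀ : 0 ≤ t) (ht₁ : t ≤ 1) : IsStrictlyPositive ((1 - t) • a + t • b) := by
  rcases ht₁.eq_or_lt with rfl | ht₁
  · simpa using hb
  · exact (ha.smul (sub_pos.2 ht₁)).add_nonneg (smul_nonneg ht₀ hb.nonneg)

theorem ringInverse_convexComb_le (ha : IsStrictlyPositive a) (hb : IsStrictlyPositive b)
    (ht₀ : 0 ≤ t) (ht₁ : t ≤ 1) :
    ((1 - t) • a + t • b)⁻¹ʳ ≤ (1 - t) • a⁻¹ʳ + t • b⁻¹ʳ := by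
  rw [← sub_nonneg, convexComb_ringInverse_sub_ringInverse_convexComb ha.isUnit hb.isUnit
    (ha.convexComb hb ht₀ ht₁).isUnit]
  have hc := (hb.ringInverse.convexComb ha.ringInverse ht₀ ht₁).ringInverse
  exact smul_nonneg (mul_nonneg ht₀ (sub_nonneg.2 ht₁))
    ((ha.ringInverse.isSelfAdjoint.sub hb.ringInverse.isSelfAdjoint).conjugate_nonneg hc.nonneg)

theorem IsSelfAdjoint.nonneg_mul_convexComb_ringInverse_sub {j : A} (hj : IsSelfAdjoint j)
    (hj₂ : j * j = 1) (ha : IsStrictlyPositive (j * a)) (hb : IsStrictlyPositive (j * b))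
    (ht₀ : 0 ≤ t) (ht₁ : t ≤ 1) :
    0 ≤ j * ((1 - t) • a⁻¹ʳ + t • b⁻¹ʳ - ((1 - t) • a + t • b)⁻¹ʳ) := by
  let u : Aˣ := ⟨j, j, hj₂, hj₂⟩
  have hju : IsUnit j := u.isUnit
  have hjinv : j⁻¹ʳ = j := inverse_unit u
  obtain ⟨p, hp, rfl⟩ : ∃ p, IsStrictlyPositive p ∧ a = j * p :=
    ⟨j * a, ha, by rw [← mul_assoc, hj₂, one_mul]⟩
  obtain ⟨q, hq, rfl⟩ : ∃ q, IsStrictlyPositive q ∧ b = j * q :=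
    ⟨j * b, hb, by rw [← mul_assoc, hj₂, one_mul]⟩
  have hconj : j * ((1 - t) • (j * p)⁻¹ʳ + t • (j * q)⁻¹ʳ - ((1 - t) • (j * p) + t • (j * q))⁻¹ʳ)
      = j * ((1 - t) • p⁻¹ʳ + t • q⁻¹ʳ - ((1 - t) • p + t • q)⁻¹ʳ) * j := by
    rw [← mul_smul_comm, ← mul_smul_comm, ← mul_add]
    simp only [inverse_mul (.inl hju), hjinv, mul_assoc, sub_mul, add_mul, smul_mul_assoc]
  rw [hconj]
  exact hj.conjugate_nonneg (sub_nonneg.2 (ringInverse_convexComb_le hp hq ht₀ ht₁))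

end CStarAlgebra

theorem inverse_is_Krein_operator_convex_general
    {H : Type*} [NormedAddCommGroup H] [InnerProductSpace ℂ H] [CompleteSpace H]
    (J : H →L[ℂ] H) (hJsa : IsSelfAdjoint J) (hJ2 : J ∘L J = 1)
    (A B : H →L[ℂ] H)
    (hA : (J ∘L A).IsPositive) (hAinv : IsUnit A)
    (hB : (J ∘L B).IsPositive) (hBinv : IsUnit B)
    (l : ℝ) (hl : l ∈ Set.Icc (0 : ℝ) 1) :
    (J ∘L (((1 - l : ℝ) : ℂ) • Ring.inverse A + ((l : ℝ) : ℂ) • Ring.inverse B -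
      Ring.inverse (((1 - l : ℝ) : ℂ) • A + ((l : ℝ) : ℂ) • B))).IsPositive := by
  have hJu : IsUnit J := ⟨⟨J, J, hJ2, hJ2⟩, rfl⟩
  rw [← nonneg_iff_isPositive] at hA hB ⊢
  simp only [Complex.coe_smul]
  exact hJsa.nonneg_mul_convexComb_ringInverse_sub hJ2 ⟨hA, hJu.mul hAinv⟩ ⟨hB, hJu.mul hBinv⟩
    hl.1 hl.2

/-- The inverse function is Krein-operator convex: for invertible `J`-positive operators
`A`, `B` on a Krein space `(H, J)`, `λ ∈ [0,1]` with `(1-λ)A + λB` invertible,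
`((1-λ)A + λB)⁻¹ ≤^J (1-λ)A⁻¹ + λB⁻¹`. -/
theorem inverse_is_Krein_operator_convex
    {H : Type*} [NormedAddCommGroup H] [InnerProductSpace ℂ H] [CompleteSpace H]
    (J : H →L[ℂ] H) (hJsa : IsSelfAdjoint J) (hJ2 : J ∘L J = 1)
    (A B : H →L[ℂ] H)
    (hA : (J ∘L A).IsPositive) (hAinv : IsUnit A)
    (hB : (J ∘L B).IsPositive) (hBinv : IsUnit B)
    (l : ℝ) (hl : l ∈ Set.Icc (0 : ℝ) 1)
    (hsum : IsUnit (((1 - l : ℝ) : ℂ) • A + ((l : ℝ) : ℂ) • B)) :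
    (J ∘L (((1 - l : ℝ) : ℂ) • Ring.inverse A + ((l : ℝ) : ℂ) • Ring.inverse B -
      Ring.inverse (((1 - l : ℝ) : ℂ) • A + ((l : ℝ) : ℂ) • B))).IsPositive :=
  inverse_is_Krein_operator_convex_general J hJsa hJ2 A B hA hAinv hB hBinv l hl
end

section
/- Let (H, J) be a Krein space and let A be a J-positive bounded operator on H, i.e. J ∘ A is a positive operator. Then the spectrum of A is real: every λ in the spectrum of A satisfies λ ∈ ℝ (its imaginary part is zero). -/
open ContinuousLinearMap

/-!
Writing `A = J (J A)` exhibits `A` as a product `j b` of a selfadjoint `j` and a positive `b`.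
Since `ab` and `ba` have the same nonzero spectrum, `j b = j √b √b` has the same nonzero spectrum
as the selfadjoint element `√b j √b`, whose spectrum is real.
-/

theorem spectrum.nonzero_mul_mul_self_comm {𝕜 A : Type*} [Field 𝕜] [Ring A] [Algebra 𝕜 A]
    (a s : A) : spectrum 𝕜 (a * (s * s)) \ {0} = spectrum 𝕜 (s * a * s) \ {0} := by
  rw [← mul_assoc, spectrum.nonzero_mul_comm, mul_assoc]

theorem IsSelfAdjoint.im_eq_zero_of_mem_spectrum_mul_nonneg {A : Type*} [CStarAlgebra A]
    [PartialOrder A] [StarOrderedRing A] {j b : A} (hj : IsSelfAdjoint j) (hb : 0 ≤ b) {z : ℂ}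
    (hz : z ∈ spectrum ℂ (j * b)) : z.im = 0 := by
  obtain rfl | hz0 := eq_or_ne z 0
  · rfl
  set s := CFC.sqrt b
  have hs : IsSelfAdjoint s := .of_nonneg (CFC.sqrt_nonneg b)
  have hsjs : IsSelfAdjoint (s * j * s) := by
    rw [IsSelfAdjoint, star_mul, star_mul, hs.star_eq, hj.star_eq, mul_assoc]
  have hz' : z ∈ spectrum ℂ (s * j * s) \ {0} := by
    rw [← spectrum.nonzero_mul_mul_self_comm, CFC.sqrt_mul_sqrt_self b hb]
    exact ⟨hz, hz0⟩
  rw [hsjs.mem_spectrum_eq_re hz'.1, Complex.ofReal_im]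

/-- The spectrum of a `J`-positive operator on a Krein space `(H, J)` is real. -/
theorem spectrum_of_J_positive_is_real
    {H : Type*} [NormedAddCommGroup H] [InnerProductSpace ℂ H] [CompleteSpace H]
    (J : H →L[ℂ] H) (hJsa : IsSelfAdjoint J) (hJ2 : J ∘L J = 1)
    (A : H →L[ℂ] H) (hA : (J ∘L A).IsPositive) :
    ∀ lam ∈ spectrum ℂ A, lam.im = 0 := by
  have hA_eq : A = J * (J ∘L A) := by
    rw [mul_def, ← comp_assoc, hJ2, one_def, id_comp]
  intro lam hlam
  rw [hA_eq] at hlam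
  exact hJsa.im_eq_zero_of_mem_spectrum_mul_nonneg ((nonneg_iff_isPositive _).mpr hA) hlam
end
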